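/- arXiv:2001.00609 — 4 statements merged into one kernel-verified Lean document; each statement's English description precedes it below -/
import Mathlib

section
/- The relation ⊑* between pregeometries is transitive: if F ⊑* H and H ⊑* G, then F ⊑* G. -/
open scoped Classical

/-- A combinatorial pregeometry (matroid) on the ground type `α`, given by a
dimension (rank) function on finite subsets. -/
structure Pregeometry (α : Type*) [DecidableEq α] where
  dim : Finset α → ℕ
  dim_empty : dim ∅ = 0
  dim_le_insert : ∀ (A : Finset α) (x : α), dim A ≤ dim (insert x A)
  insert_le_dim : ∀ (A : Finset α) (x : α), dim (insert x A) ≤ dim A + 1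
  submodular : ∀ A B : Finset α, dim (A ∪ B) + dim (A ∩ B) ≤ dim A + dim B

namespace Pregeometry

variable {α : Type*} [DecidableEq α] (G : Pregeometry α)

/-- Closure of an arbitrary subset. -/
def cl (Y : Set α) : Set α :=
  {x | ∃ A : Finset α, ↑A ⊆ Y ∧ G.dim (insert x A) = G.dim A}

/-- `Y` is closed (in the ambient pregeometry `G`). -/
def IsClosed (Y : Set α) : Prop := G.cl Y = Y

/-- `X` is a closed set of the subpregeometry of `G` induced on `P`
(whose closure operator is `Y ↦ cl Y ∩ P`). -/
def IsClosedIn (P X : Set α) : Prop := X ⊆ P ∧ G.cl X ∩ P = X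

/-- Dimension of an arbitrary subset, with value `⊤` when infinite-dimensional. -/
noncomputable def edim (Y : Set α) : ℕ∞ :=
  ⨆ (A : Finset α) (_ : ↑A ⊆ Y), (G.dim A : ℕ∞)

/-- The (natural number) dimension of a finite-dimensional subset. -/
noncomputable def sdim (Y : Set α) : ℕ := (G.edim Y).toNat

/-- The alternating inclusion–exclusion sum
`Δ_G(Σ) = Σ_{∅ ≠ S ⊆ Σ} (-1)^{|S|+1} d(⋂ S)` of a finite collection of sets. -/
noncomputable def flatSum (Sig : Finset (Set α)) : ℤ :=
  ∑ S ∈ Sig.powerset.filter (· ≠ ∅),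
    (-1) ^ (S.card + 1) * (G.sdim (⋂₀ ↑S) : ℤ)

/-- `P ⊑* Q`: for the subpregeometries induced on `P ⊆ Q`, the dimension of the
intersection of two closed sets of `P` equals the dimension of the intersection
of their closures in `Q` (the closure of `X` in `Q` being `cl X ∩ Q`). -/
def SqStar (P Q : Set α) : Prop := P ⊆ Q ∧
  ∀ X₁ X₂ : Set α, G.IsClosedIn P X₁ → G.IsClosedIn P X₂ →
    G.edim (X₁ ∩ X₂) = G.edim (G.cl X₁ ∩ G.cl X₂ ∩ Q)

/-- `P ⊑ Q`: `P` is strongly embedded in `Q`: for every finite collection `Σ` of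
finite-dimensional closed sets of `Q`, `Δ_P(Σ_P) ≤ Δ_Q(Σ)` where
`Σ_P = {E ∩ P : E ∈ Σ}`. -/
def Sq (P Q : Set α) : Prop := P ⊆ Q ∧
  ∀ Sig : Finset (Set α), (∀ E ∈ Sig, G.IsClosedIn Q E) →
    (∀ E ∈ Sig, G.edim E ≠ ⊤) →
    G.flatSum (Sig.image (· ∩ P)) ≤ G.flatSum Sig

/-- The subpregeometry induced on `P` is flat: every finite collection of
finite-dimensional closed sets satisfies `d(⋃ Σ) ≤ Δ(Σ)`. -/
def FlatIn (P : Set α) : Prop :=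
  ∀ Sig : Finset (Set α), (∀ E ∈ Sig, G.IsClosedIn P E) →
    (∀ E ∈ Sig, G.edim E ≠ ⊤) →
    (G.sdim (⋃₀ ↑Sig) : ℤ) ≤ G.flatSum Sig

/-- The α-function of the subpregeometry of `G` induced on `P`:
`α(X) = |X| − d(X) − Σ_{Y ⊊ X closed} α(Y)`. -/
noncomputable def alphaIn (P : Set α) (X : Finset α) : ℤ :=
  (X.card : ℤ) - (G.dim X : ℤ) -
    ∑ Y ∈ (X.powerset.filter fun Y => Y ≠ X ∧ G.IsClosedIn P ↑Y).attach,
      alphaIn P Y.1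
termination_by X.card
decreasing_by
  have h := Y.2
  simp only [Finset.mem_filter, Finset.mem_powerset] at h
  exact Finset.card_lt_card (lt_of_le_of_ne h.1 h.2.1)

end Pregeometry

/-- A hypergraph on the vertex type `α`: a set of nonempty finite edges. -/
structure SetHypergraph (α : Type*) where
  edges : Set (Finset α)
  nonempty_edges : ∀ e ∈ edges, e ≠ ∅

namespace SetHypergraph

variable {α : Type*} [DecidableEq α] (A : SetHypergraph α)

/-- The set of edges contained in a set of vertices. -/
def edgesIn (P : Set α) : Set (Finset α) := {e | e ∈ A.edges ∧ ↑e ⊆ P}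

/-- The predimension `δ(P) = |P| − |R[P]|` of a finite set of vertices. -/
noncomputable def delta (P : Finset α) : ℤ :=
  (P.card : ℤ) - (A.edgesIn ↑P).ncard

/-- The relative predimension `δ(L/P) = |L∖P| − |R[L∪P]∖R[P]|`. -/
noncomputable def deltaRel (L : Finset α) (P : Set α) : ℤ :=
  ((↑L \ P : Set α).ncard : ℤ) -
    ({e | e ∈ A.edges ∧ ↑e ⊆ ↑L ∪ P ∧ ¬ ↑e ⊆ P} : Set (Finset α)).ncard

/-- `P` is self-sufficient in `A`: `δ(X/P) ≥ 0` for every finite `X`, stated so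
as to be meaningful even when infinitely many edges are involved. -/
def SelfSuff (P : Set α) : Prop :=
  ∀ X : Finset α, ∀ Es : Finset (Finset α),
    (∀ e ∈ Es, e ∈ A.edges ∧ ↑e ⊆ ↑X ∪ P ∧ ¬ ↑e ⊆ P) →
    (Es.card : ℤ) ≤ ((↑X \ P : Set α).ncard : ℤ)

/-- The dimension function associated to a hypergraph:
`d(X) = inf {δ(B) : X ⊆ B finite}`. -/
noncomputable def hdim (X : Finset α) : ℤ :=
  sInf {d : ℤ | ∃ B : Finset α, X ⊆ B ∧ d = A.delta B}

/-- The induced subhypergraph on a set `P` of vertices (keeping `α` as the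
ambient vertex type). -/
def restrict (P : Set α) : SetHypergraph α :=
  ⟨{e | e ∈ A.edges ∧ ↑e ⊆ P}, fun e he => A.nonempty_edges e he.1⟩

/-- A pregeometry `G` is represented by the hypergraph `A` if the associated
dimension function of `A` is the dimension function of `G`. -/
def Represents (G : Pregeometry α) : Prop :=
  ∀ X : Finset α, (G.dim X : ℤ) = A.hdim X

end SetHypergraph

namespace Pregeometry

variable {α : Type*} [DecidableEq α] (G : Pregeometry α)

lemma dim_le_dim_union (A C : Finset α) : G.dim A ≤ G.dim (A ∪ C) := by
  induction C using Finset.induction_on with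
  | empty => simp
  | insert x C _ ih => rw [Finset.union_insert]; exact ih.trans (G.dim_le_insert _ _)

lemma dim_mono {A B : Finset α} (h : A ⊆ B) : G.dim A ≤ G.dim B := by
  simpa [Finset.union_eq_right.mpr h] using G.dim_le_dim_union A B

lemma dim_insert_eq_of_subset {A B : Finset α} {x : α} (hAB : A ⊆ B)
    (h : G.dim (insert x A) = G.dim A) : G.dim (insert x B) = G.dim B := by
  have hsub := G.submodular (insert x A) B
  rw [Finset.insert_union, Finset.union_eq_right.mpr hAB, h] at hsub
  have hA := G.dim_mono (Finset.subset_inter (Finset.subset_insert x A) hAB)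
  have hB := G.dim_le_insert B x
  omega

lemma dim_union_eq_of_forall_dim_insert_eq {B C : Finset α}
    (h : ∀ b ∈ B, G.dim (insert b C) = G.dim C) : G.dim (B ∪ C) = G.dim C := by
  induction B using Finset.induction_on with
  | empty => simp
  | insert b B _ ih =>
    rw [Finset.insert_union, G.dim_insert_eq_of_subset Finset.subset_union_right
      (h b (Finset.mem_insert_self b B))]
    exact ih fun b' hb' => h b' (Finset.mem_insert_of_mem hb')

lemma subset_cl (X : Set α) : X ⊆ G.cl X :=
  fun x hx => ⟨{x}, by simpa using hx, by simp⟩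

lemma cl_mono {X Y : Set α} (h : X ⊆ Y) : G.cl X ⊆ G.cl Y :=
  fun _ ⟨A, hA, hd⟩ => ⟨A, hA.trans h, hd⟩

lemma cl_cl (X : Set α) : G.cl (G.cl X) = G.cl X := by
  refine Set.Subset.antisymm ?_ (G.subset_cl _)
  rintro x ⟨B, hB, hx⟩
  -- The union `C ⊆ X` of witnesses for the points of `B` spans `B`, hence also spans `x`.
  choose! f hfX hf using fun b (hb : b ∈ B) => hB hb
  set C := B.biUnion f
  have hCX : ↑C ⊆ X := by
    simpa [C, Set.iUnion_subset_iff] using fun b hb => hfX b hb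
  have hBC : G.dim (B ∪ C) = G.dim C := G.dim_union_eq_of_forall_dim_insert_eq fun b hb =>
    G.dim_insert_eq_of_subset (Finset.subset_biUnion_of_mem f hb) (hf b hb)
  have hxBC : G.dim (insert x (B ∪ C)) = G.dim (B ∪ C) :=
    G.dim_insert_eq_of_subset Finset.subset_union_left hx
  have hxC : G.dim (insert x C) ≤ G.dim (insert x (B ∪ C)) :=
    G.dim_mono (Finset.insert_subset_insert x Finset.subset_union_right)
  exact ⟨C, hCX, le_antisymm (by omega) (G.dim_le_insert C x)⟩

lemma cl_cl_inter_of_subset {X P : Set α} (hXP : X ⊆ P) : G.cl (G.cl X ∩ P) = G.cl X :=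
  Set.Subset.antisymm ((G.cl_mono Set.inter_subset_left).trans (G.cl_cl X).subset)
    (G.cl_mono fun _ hx => ⟨G.subset_cl X hx, hXP hx⟩)

lemma isClosedIn_cl_inter_of_subset {X P : Set α} (hXP : X ⊆ P) :
    G.IsClosedIn P (G.cl X ∩ P) :=
  ⟨Set.inter_subset_right, by rw [G.cl_cl_inter_of_subset hXP]⟩

end Pregeometry

/-- the relation `⊑*` is transitive. -/
theorem sqStar_trans {α : Type*} [DecidableEq α] (G : Pregeometry α)
    (F H Q : Set α) (hFH : G.SqStar F H) (hHQ : G.SqStar H Q) :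
    G.SqStar F Q := by
  obtain ⟨hFH, hFH_edim⟩ := hFH
  obtain ⟨hHQ, hHQ_edim⟩ := hHQ
  refine ⟨hFH.trans hHQ, fun X₁ X₂ h₁ h₂ => ?_⟩
  have hX₁ : X₁ ⊆ H := h₁.1.trans hFH
  have hX₂ : X₂ ⊆ H := h₂.1.trans hFH
  -- `cl X ∩ H` is the closure of `X` in `H`, and its closure in `Q` is again `cl X ∩ Q`.
  have hQ := hHQ_edim _ _ (G.isClosedIn_cl_inter_of_subset hX₁)
    (G.isClosedIn_cl_inter_of_subset hX₂)
  rw [G.cl_cl_inter_of_subset hX₁, G.cl_cl_inter_of_subset hX₂] at hQ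
  rw [hFH_edim X₁ X₂ h₁ h₂, Set.inter_inter_distrib_right, hQ]
end

section
/- If H ⊑* G and Σ is a finite set of finite-dimensional closed subsets of H, then Δ_G(Σ_G) = Δ_H(Σ), where Σ_G = {cl_G(E) : E ∈ Σ}. -/
open scoped Classical

/-- A hypergraph on the vertex type `α`: a set of nonempty finite edges. -/
structure EdgeHypergraph (α : Type*) where
  edges : Set (Finset α)
  nonempty_edges : ∀ e ∈ edges, e ≠ ∅

namespace EdgeHypergraph

variable {α : Type*} [DecidableEq α] (A : EdgeHypergraph α)

/-- The set of edges contained in a set of vertices. -/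
def edgesIn (P : Set α) : Set (Finset α) := {e | e ∈ A.edges ∧ ↑e ⊆ P}

/-- The predimension `δ(P) = |P| − |R[P]|` of a finite set of vertices. -/
noncomputable def delta (P : Finset α) : ℤ :=
  (P.card : ℤ) - (A.edgesIn ↑P).ncard

/-- The relative predimension `δ(L/P) = |L∖P| − |R[L∪P]∖R[P]|`. -/
noncomputable def deltaRel (L : Finset α) (P : Set α) : ℤ :=
  ((↑L \ P : Set α).ncard : ℤ) -
    ({e | e ∈ A.edges ∧ ↑e ⊆ ↑L ∪ P ∧ ¬ ↑e ⊆ P} : Set (Finset α)).ncard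

/-- `P` is self-sufficient in `A`: `δ(X/P) ≥ 0` for every finite `X`, stated so
as to be meaningful even when infinitely many edges are involved. -/
def SelfSuff (P : Set α) : Prop :=
  ∀ X : Finset α, ∀ Es : Finset (Finset α),
    (∀ e ∈ Es, e ∈ A.edges ∧ ↑e ⊆ ↑X ∪ P ∧ ¬ ↑e ⊆ P) →
    (Es.card : ℤ) ≤ ((↑X \ P : Set α).ncard : ℤ)

/-- The dimension function associated to a hypergraph:
`d(X) = inf {δ(B) : X ⊆ B finite}`. -/
noncomputable def hdim (X : Finset α) : ℤ :=
  sInf {d : ℤ | ∃ B : Finset α, X ⊆ B ∧ d = A.delta B}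

/-- The induced subhypergraph on a set `P` of vertices (keeping `α` as the
ambient vertex type). -/
def restrict (P : Set α) : EdgeHypergraph α :=
  ⟨{e | e ∈ A.edges ∧ ↑e ⊆ P}, fun e he => A.nonempty_edges e he.1⟩

/-- A pregeometry `G` is represented by the hypergraph `A` if the associated
dimension function of `A` is the dimension function of `G`. -/
def Represents (G : Pregeometry α) : Prop :=
  ∀ X : Finset α, (G.dim X : ℤ) = A.hdim X

end EdgeHypergraph

/-!
Every `E ∈ Σ` is closed in `H`, so `E = cl E ∩ H`; hence `cl` is injective on `Σ` and
`S ↦ cl '' S` matches the nonempty subfamilies of `Σ` with those of `Σ_G`. Since a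
finite-dimensional closure has no proper superset of the same dimension, `H ⊑* G` upgrades to
`cl E₁ ∩ cl E₂ = cl (E₁ ∩ E₂)`, and by induction `⋂ cl '' S = cl (⋂ S)`. As `cl` preserves
dimension, matching terms of the two alternating sums coincide.
-/

namespace Pregeometry

variable {α : Type*} [DecidableEq α] (G : Pregeometry α)

lemma dim_union_eq_of_subset {A B B' : Finset α} (h : G.dim (A ∪ B) = G.dim B)
    (hBB' : B ⊆ B') : G.dim (A ∪ B') = G.dim B' := by
  have hsub := G.submodular (A ∪ B) B'
  rw [Finset.union_assoc, Finset.union_eq_right.mpr hBB', h] at hsub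
  have h1 : G.dim B ≤ G.dim ((A ∪ B) ∩ B') :=
    G.dim_mono (Finset.subset_inter Finset.subset_union_right hBB')
  have h2 : G.dim B' ≤ G.dim (A ∪ B') := G.dim_mono Finset.subset_union_right
  omega

lemma dim_insert_of_notMem_cl {X : Set α} {A : Finset α} {x : α}
    (hx : x ∉ G.cl X) (hA : ↑A ⊆ X) : G.dim (insert x A) = G.dim A + 1 := by
  have hne : G.dim (insert x A) ≠ G.dim A := fun h => hx ⟨A, hA, h⟩
  have h1 := G.dim_le_insert A x
  have h2 := G.insert_le_dim A x
  omega

lemma exists_subset_dim_union_eq {X : Set α} {A : Finset α} (hA : ↑A ⊆ G.cl X) :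
    ∃ C : Finset α, ↑C ⊆ X ∧ G.dim (A ∪ C) = G.dim C := by
  induction A using Finset.induction_on with
  | empty => exact ⟨∅, by simp, by simp⟩
  | @insert a A ha ih =>
    obtain ⟨Ca, hCa, hda⟩ : a ∈ G.cl X := hA (by simp)
    obtain ⟨C, hC, hdC⟩ := ih fun y hy => hA (by simp [hy])
    refine ⟨Ca ∪ C, by rw [Finset.coe_union]; exact Set.union_subset hCa hC, ?_⟩
    have h1 : G.dim (A ∪ (Ca ∪ C)) = G.dim (Ca ∪ C) :=
      G.dim_union_eq_of_subset hdC Finset.subset_union_right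
    have h2 : G.dim ({a} ∪ (A ∪ (Ca ∪ C))) = G.dim (A ∪ (Ca ∪ C)) :=
      G.dim_union_eq_of_subset (B := Ca) (by rwa [← Finset.insert_eq])
        (Finset.subset_union_left.trans Finset.subset_union_right)
    rwa [Finset.insert_union, Finset.insert_eq, h2]

lemma isClosedIn_sInter {H : Set α} {T : Set (Set α)} (hT : T.Nonempty)
    (h : ∀ E ∈ T, G.IsClosedIn H E) : G.IsClosedIn H (⋂₀ T) := by
  obtain ⟨E₀, hE₀⟩ := hT
  have hsubH : ⋂₀ T ⊆ H := (Set.sInter_subset_of_mem hE₀).trans (h E₀ hE₀).1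
  refine ⟨hsubH, Set.Subset.antisymm ?_ fun x hx => ⟨G.subset_cl _ hx, hsubH hx⟩⟩
  rintro x ⟨hxcl, hxH⟩
  refine Set.mem_sInter.mpr fun E hE => ?_
  rw [← (h E hE).2]
  exact ⟨G.cl_mono (Set.sInter_subset_of_mem hE) hxcl, hxH⟩

lemma injOn_cl (H : Set α) : Set.InjOn G.cl {E | G.IsClosedIn H E} := by
  intro E hE E' hE' h
  rw [← hE.2, ← hE'.2, h]

lemma dim_le_edim {X : Set α} {A : Finset α} (hA : ↑A ⊆ X) :
    (G.dim A : ℕ∞) ≤ G.edim X :=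
  le_iSup₂_of_le A hA le_rfl

lemma edim_mono {X Y : Set α} (h : X ⊆ Y) : G.edim X ≤ G.edim Y :=
  iSup₂_le fun _ hA => G.dim_le_edim (hA.trans h)

lemma exists_dim_eq_edim {X : Set α} (h : G.edim X ≠ ⊤) :
    ∃ A : Finset α, ↑A ⊆ X ∧ (G.dim A : ℕ∞) = G.edim X := by
  have : Nonempty {A : Finset α // ↑A ⊆ X} := ⟨⟨∅, by simp⟩⟩
  rw [edim, iSup_subtype'] at h ⊢
  obtain ⟨⟨A, hA⟩, hAeq⟩ := ENat.exists_eq_iSup_of_lt_top (lt_top_iff_ne_top.mpr h)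
  exact ⟨A, hA, hAeq⟩

lemma edim_cl (X : Set α) : G.edim (G.cl X) = G.edim X := by
  refine le_antisymm (iSup₂_le fun A hA => ?_) (G.edim_mono (G.subset_cl X))
  obtain ⟨C, hC, hdC⟩ := G.exists_subset_dim_union_eq hA
  calc (G.dim A : ℕ∞) ≤ G.dim (A ∪ C) := by exact_mod_cast G.dim_mono Finset.subset_union_left
    _ = G.dim C := by rw [hdC]
    _ ≤ G.edim X := G.dim_le_edim hC

lemma eq_cl_of_cl_subset_of_edim_eq {X Y : Set α} (hX : G.edim X ≠ ⊤) (hXY : G.cl X ⊆ Y)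
    (hdim : G.edim Y = G.edim X) : Y = G.cl X := by
  refine Set.Subset.antisymm (fun y hy => ?_) hXY
  by_contra hycl
  obtain ⟨A, hA, hdA⟩ := G.exists_dim_eq_edim hX
  have hAY : ↑(insert y A) ⊆ Y := by
    rw [Finset.coe_insert]
    exact Set.insert_subset hy ((hA.trans (G.subset_cl X)).trans hXY)
  have hle := G.dim_le_edim hAY
  rw [hdim, ← hdA, G.dim_insert_of_notMem_cl hycl hA] at hle
  norm_cast at hle
  omega

lemma cl_inter_of_sqStar {H X₁ X₂ : Set α} (hH : G.SqStar H Set.univ)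
    (h₁ : G.IsClosedIn H X₁) (h₂ : G.IsClosedIn H X₂) (hfin : G.edim (X₁ ∩ X₂) ≠ ⊤) :
    G.cl X₁ ∩ G.cl X₂ = G.cl (X₁ ∩ X₂) := by
  refine G.eq_cl_of_cl_subset_of_edim_eq hfin
    (Set.subset_inter (G.cl_mono Set.inter_subset_left) (G.cl_mono Set.inter_subset_right)) ?_
  rw [hH.2 X₁ X₂ h₁ h₂, Set.inter_univ]

lemma cl_sInter_of_sqStar {H : Set α} (hH : G.SqStar H Set.univ) {S : Finset (Set α)}
    (hS : S.Nonempty) (hcl : ∀ E ∈ S, G.IsClosedIn H E) (hfd : ∀ E ∈ S, G.edim E ≠ ⊤) :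
    G.cl (⋂₀ ↑S) = ⋂₀ ↑(S.image G.cl) := by
  induction hS using Finset.Nonempty.cons_induction with
  | singleton E => simp
  | cons E S hES hS ih =>
    simp only [Finset.mem_cons, forall_eq_or_imp] at hcl hfd
    have hfin : G.edim (E ∩ ⋂₀ ↑S) ≠ ⊤ :=
      ne_top_of_le_ne_top hfd.1 (G.edim_mono Set.inter_subset_left)
    rw [Finset.cons_eq_insert, Finset.coe_insert, Set.sInter_insert, Finset.image_insert,
      Finset.coe_insert, Set.sInter_insert, ← ih hcl.2 hfd.2,
      G.cl_inter_of_sqStar hH hcl.1 (G.isClosedIn_sInter (Finset.coe_nonempty.mpr hS) hcl.2) hfin]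

theorem flatSum_image {f : Set α → Set α} {Sig : Finset (Set α)} (hf : Set.InjOn f Sig)
    (hdim : ∀ S ⊆ Sig, S.Nonempty → G.sdim (⋂₀ ↑(S.image f)) = G.sdim (⋂₀ ↑S)) :
    G.flatSum (Sig.image f) = G.flatSum Sig := by
  have hsubsets : (Sig.image f).powerset.filter (· ≠ ∅) =
      (Sig.powerset.filter (· ≠ ∅)).image (·.image f) := by
    simp [Finset.powerset_image, Finset.filter_image, Finset.image_eq_empty]
  rw [flatSum, hsubsets, Finset.sum_image]
  · refine Finset.sum_congr rfl fun S hS => ?_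
    obtain ⟨hS, hne⟩ := Finset.mem_filter.mp hS
    rw [Finset.mem_powerset] at hS
    rw [Finset.card_image_of_injOn (hf.mono hS),
      hdim S hS (Finset.nonempty_iff_ne_empty.mpr hne)]
  · exact (Finset.image_injOn_powerset_of_injOn hf).mono fun S hS => (Finset.mem_filter.mp hS).1

end Pregeometry

/-- if `H ⊑* G` and `Σ` is a finite set of finite-dimensional
closed subsets of `H`, then `Δ_G(Σ_G) = Δ_H(Σ)` where `Σ_G = {cl_G E : E ∈ Σ}`. -/
theorem flatSum_image_cl_of_sqStar {α : Type*} [DecidableEq α] (G : Pregeometry α)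
    (H : Set α) (hH : G.SqStar H Set.univ) (Sig : Finset (Set α))
    (hcl : ∀ E ∈ Sig, G.IsClosedIn H E) (hfd : ∀ E ∈ Sig, G.edim E ≠ ⊤) :
    G.flatSum (Sig.image G.cl) = G.flatSum Sig := by
  refine G.flatSum_image ((G.injOn_cl H).mono hcl) fun S hS hne => ?_
  rw [Pregeometry.sdim, Pregeometry.sdim, ← G.edim_cl (⋂₀ ↑S),
    G.cl_sInter_of_sqStar hH hne (fun E hE => hcl E (hS hE)) (fun E hE => hfd E (hS hE))]
end

section
/- In a hypergraph A = (M,R) with associated dimension function bounded below by 0, if X and Y are both self-sufficient in A, then X ∩ Y is self-sufficient in A. -/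
open scoped Classical

/-- A hypergraph on the vertex type `α`: a set of nonempty finite edges. -/
structure Hypergraph' (α : Type*) where
  edges : Set (Finset α)
  nonempty_edges : ∀ e ∈ edges, e ≠ ∅

namespace Hypergraph'

variable {α : Type*} [DecidableEq α] (A : Hypergraph' α)

/-- The set of edges contained in a set of vertices. -/
def edgesIn (P : Set α) : Set (Finset α) := {e | e ∈ A.edges ∧ ↑e ⊆ P}

/-- The predimension `δ(P) = |P| − |R[P]|` of a finite set of vertices. -/
noncomputable def delta (P : Finset α) : ℤ :=
  (P.card : ℤ) - (A.edgesIn ↑P).ncard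

/-- The relative predimension `δ(L/P) = |L∖P| − |R[L∪P]∖R[P]|`. -/
noncomputable def deltaRel (L : Finset α) (P : Set α) : ℤ :=
  ((↑L \ P : Set α).ncard : ℤ) -
    ({e | e ∈ A.edges ∧ ↑e ⊆ ↑L ∪ P ∧ ¬ ↑e ⊆ P} : Set (Finset α)).ncard

/-- `P` is self-sufficient in `A`: `δ(X/P) ≥ 0` for every finite `X`, stated so
as to be meaningful even when infinitely many edges are involved. -/
def SelfSuff (P : Set α) : Prop :=
  ∀ X : Finset α, ∀ Es : Finset (Finset α),
    (∀ e ∈ Es, e ∈ A.edges ∧ ↑e ⊆ ↑X ∪ P ∧ ¬ ↑e ⊆ P) →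
    (Es.card : ℤ) ≤ ((↑X \ P : Set α).ncard : ℤ)

/-- The dimension function associated to a hypergraph:
`d(X) = inf {δ(B) : X ⊆ B finite}`. -/
noncomputable def hdim (X : Finset α) : ℤ :=
  sInf {d : ℤ | ∃ B : Finset α, X ⊆ B ∧ d = A.delta B}

/-- The induced subhypergraph on a set `P` of vertices (keeping `α` as the
ambient vertex type). -/
def restrict (P : Set α) : Hypergraph' α :=
  ⟨{e | e ∈ A.edges ∧ ↑e ⊆ P}, fun e he => A.nonempty_edges e he.1⟩

/-- A pregeometry `G` is represented by the hypergraph `A` if the associated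
dimension function of `A` is the dimension function of `G`. -/
def Represents (G : Pregeometry α) : Prop :=
  ∀ X : Finset α, (G.dim X : ℤ) = A.hdim X

end Hypergraph'

theorem Set.ncard_diff_inter_eq {α : Type*} {Z : Set α} (hZ : Z.Finite) (X Y : Set α) :
    (Z \ (X ∩ Y)).ncard = (Z \ X).ncard + ((Z ∩ X) \ Y).ncard := by
  rw [← Set.ncard_inter_add_ncard_sdiff_eq_ncard (Z \ (X ∩ Y)) X hZ.sdiff, add_comm]
  congr 2 <;> ext x <;> simp only [Set.mem_sdiff, Set.mem_inter_iff] <;> tauto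

namespace Hypergraph'

variable {α : Type*} {A : Hypergraph' α}

theorem SelfSuff.card_le_ncard_diff {P S : Set α} (hP : A.SelfSuff P) (hS : S.Finite)
    (Es : Finset (Finset α)) (hEs : ∀ e ∈ Es, e ∈ A.edges ∧ ↑e ⊆ S ∪ P ∧ ¬ ↑e ⊆ P) :
    (Es.card : ℤ) ≤ (S \ P).ncard := by
  simpa only [hS.coe_toFinset] using
    hP hS.toFinset Es (by simpa only [hS.coe_toFinset] using hEs)

end Hypergraph'

theorem selfSuff_inter_general {α : Type*} (A : Hypergraph' α)
    (X Y : Set α)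
    (hX : A.SelfSuff X) (hY : A.SelfSuff Y) : A.SelfSuff (X ∩ Y) := by
  intro Z Es hEs
  -- Edges leaving `X` are paid for by `X ≤ A`, edges inside `X` but leaving `Y` by `Y ≤ A`
  -- applied to `Z ∩ X`.
  have hout : ((Es.filter fun e : Finset α => ¬ (e : Set α) ⊆ X).card : ℤ) ≤
      (↑Z \ X : Set α).ncard :=
    hX.card_le_ncard_diff Z.finite_toSet _ fun e he => by
      obtain ⟨he, heX⟩ := Finset.mem_filter.1 he
      obtain ⟨hedge, hsub, -⟩ := hEs e he
      exact ⟨hedge, hsub.trans (Set.union_subset_union_right _ Set.inter_subset_left), heX⟩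
  have hin : ((Es.filter fun e : Finset α => (e : Set α) ⊆ X).card : ℤ) ≤
      ((↑Z ∩ X) \ Y : Set α).ncard :=
    hY.card_le_ncard_diff (Z.finite_toSet.inter_of_left X) _ fun e he => by
      obtain ⟨he, heX⟩ := Finset.mem_filter.1 he
      obtain ⟨hedge, hsub, heXY⟩ := hEs e he
      refine ⟨hedge, fun x hx => ?_, fun heY => heXY (Set.subset_inter heX heY)⟩
      rcases hsub hx with hZ | ⟨-, hY⟩
      exacts [Or.inl ⟨hZ, heX hx⟩, Or.inr hY]
  rw [← Finset.card_filter_add_card_filter_not (s := Es) (fun e : Finset α => (e : Set α) ⊆ X),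
    Set.ncard_diff_inter_eq Z.finite_toSet]
  push_cast
  omega

/-- the intersection of two self-sufficient sets is
self-sufficient (in a hypergraph whose dimension function is bounded below
by `0`, i.e. `∅` is self-sufficient). -/
theorem selfSuff_inter {α : Type*} [DecidableEq α] (A : Hypergraph' α)
    (hA : A.SelfSuff ∅) (X Y : Set α)
    (hX : A.SelfSuff X) (hY : A.SelfSuff Y) : A.SelfSuff (X ∩ Y) :=
  selfSuff_inter_general A X Y hX hY
end

section
/- Let A = (M,R) be a hypergraph with ∅ self-sufficient in A, and let P ≤ A be self-sufficient. If Y₁,...,Y_n ⊆ M satisfy δ_A(Y_i / Y_i ∩ P) ≤ 0 for each i, then P ∪ Y₁ ∪ ... ∪ Y_n is self-sufficient in A and the Y_i are freely joined over P, i.e., R[P ∪ ∪_i Y_i] = R[P] ∪ ∪_i R[Y_i]. -/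
open scoped Classical

/-!
The relative predimension satisfies the tower law `δ(X ∪ L / P) = δ(X / P ∪ L) + δ(L / P)`,
so if `P ≤ A` and `δ(L / P) ≤ 0` then `P ∪ L ≤ A`. For `P ≤ A` we have
`0 ≤ δ(L / P) ≤ δ(L / L ∩ P)`; when the right-hand side is `≤ 0` both counts of new edges agree,
i.e. every edge of `R[P ∪ L]` not in `R[P]` already lies in `L`: this is free joining.
By the tower law again, `δ(Y / Y ∩ P)` can only decrease when `P` grows inside a self-sufficient
set, so the `Yᵢ` can be added one at a time.
-/

namespace Hypergraph'

variable {α : Type*} (A : Hypergraph' α)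

/-- `R[L ∪ P] ∖ R[P]`. -/
def newEdges (L P : Set α) : Set (Finset α) := {e | e ∈ A.edges ∧ ↑e ⊆ L ∪ P ∧ ¬ ↑e ⊆ P}

theorem deltaRel_def (L : Finset α) (P : Set α) :
    A.deltaRel L P = ((↑L \ P : Set α).ncard : ℤ) - (A.newEdges ↑L P).ncard :=
  rfl

theorem newEdges_finite (L Z : Finset α) : (A.newEdges ↑L ↑Z).Finite :=
  (L ∪ Z).powerset.finite_toSet.subset fun e he =>
    Finset.mem_powerset.2 (Finset.coe_subset.1 (by rw [Finset.coe_union]; exact he.2.1))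

theorem newEdges_inter_subset (L P : Set α) : A.newEdges L (L ∩ P) ⊆ A.newEdges L P :=
  fun _ ⟨he, heL, heP⟩ =>
    ⟨he, heL.trans (Set.union_subset_union_right L Set.inter_subset_right),
      fun h => heP (Set.subset_inter
        (heL.trans (Set.union_subset subset_rfl Set.inter_subset_left)) h)⟩

theorem deltaRel_union (X L : Finset α) (P : Set α) (hfin : (A.newEdges ↑(X ∪ L) P).Finite) :
    A.deltaRel (X ∪ L) P = A.deltaRel X (P ∪ ↑L) + A.deltaRel L P := by
  have hvert : ((↑(X ∪ L) \ P : Set α)).ncard = (↑X \ (P ∪ ↑L) : Set α).ncard +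
      (↑L \ P : Set α).ncard := by
    have hdecomp : (↑(X ∪ L) \ P : Set α) = (↑X \ (P ∪ ↑L)) ∪ (↑L \ P) := by
      ext x
      simp only [Finset.coe_union, Set.mem_sdiff, Set.mem_union]
      tauto
    have hdisj : Disjoint (↑X \ (P ∪ ↑L) : Set α) (↑L \ P) :=
      Set.disjoint_left.2 fun x hx hx' => hx.2 (Or.inr hx'.1)
    rw [hdecomp, Set.ncard_union_eq hdisj X.finite_toSet.sdiff L.finite_toSet.sdiff]
  have hsplit : A.newEdges ↑(X ∪ L) P = A.newEdges ↑X (P ∪ ↑L) ∪ A.newEdges ↑L P := by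
    ext e
    simp only [newEdges, Finset.coe_union, Set.mem_union, Set.mem_ofPred_eq]
    constructor
    · rintro ⟨he, heXL, heP⟩
      by_cases heLP : ↑e ⊆ ↑L ∪ P
      · exact Or.inr ⟨he, heLP, heP⟩
      · exact Or.inl ⟨he, heXL.trans (by tauto_set), fun h => heLP (h.trans (by tauto_set))⟩
    · rintro (⟨he, heX, hePL⟩ | ⟨he, heL, heP⟩)
      · exact ⟨he, heX.trans (by tauto_set), fun h => hePL (h.trans Set.subset_union_left)⟩
      · exact ⟨he, heL.trans (by tauto_set), heP⟩
  have hdisj : Disjoint (A.newEdges ↑X (P ∪ ↑L)) (A.newEdges ↑L P) :=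
    Set.disjoint_left.2 fun e he he' => he.2.2 (by simpa [Set.union_comm] using he'.2.1)
  rw [hsplit] at hfin
  have hedge := Set.ncard_union_eq hdisj (hfin.subset Set.subset_union_left)
    (hfin.subset Set.subset_union_right)
  simp only [deltaRel_def, hvert, hsplit, hedge]
  push_cast
  ring

theorem selfSuff_iff {P : Set α} :
    A.SelfSuff P ↔ ∀ X : Finset α, (A.newEdges ↑X P).Finite ∧ 0 ≤ A.deltaRel X P := by
  constructor
  · intro hP X
    have hbound (Es : Finset (Finset α)) (hEs : ↑Es ⊆ A.newEdges ↑X P) :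
        Es.card ≤ (↑X \ P : Set α).ncard := by
      exact_mod_cast hP X Es hEs
    have hfin : (A.newEdges ↑X P).Finite := by
      by_contra hinf
      obtain ⟨Es, hEs, hcard⟩ := (Set.Infinite.exists_subset_card_eq hinf
        ((↑X \ P : Set α).ncard + 1))
      have := hbound Es hEs
      omega
    refine ⟨hfin, ?_⟩
    have := hbound hfin.toFinset (by simp)
    rw [← Set.ncard_eq_toFinset_card _ hfin] at this
    rw [deltaRel_def]
    omega
  · intro h X Es hEs
    obtain ⟨hfin, hnonneg⟩ := h X
    have : Es.card ≤ (A.newEdges ↑X P).ncard := by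
      rw [← Set.ncard_coe_finset]
      exact Set.ncard_le_ncard hEs hfin
    rw [deltaRel_def] at hnonneg
    omega

variable {A}

theorem SelfSuff.deltaRel_le_deltaRel_inter {P : Set α} (hP : A.SelfSuff P) (L : Finset α) :
    A.deltaRel L P ≤ A.deltaRel L (↑L ∩ P) := by
  have := Set.ncard_le_ncard (A.newEdges_inter_subset ↑L P) ((A.selfSuff_iff.1 hP L).1)
  rw [deltaRel_def, deltaRel_def, Set.sdiff_self_inter]
  omega

theorem SelfSuff.deltaRel_inter_nonneg {P : Set α} (hP : A.SelfSuff P) (L : Finset α) :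
    0 ≤ A.deltaRel L (↑L ∩ P) :=
  ((A.selfSuff_iff.1 hP L).2).trans (hP.deltaRel_le_deltaRel_inter L)

theorem SelfSuff.deltaRel_inter_le_of_subset {P Q : Set α} (hP : A.SelfSuff P) (hPQ : P ⊆ Q)
    (L : Finset α) : A.deltaRel L (↑L ∩ Q) ≤ A.deltaRel L (↑L ∩ P) := by
  set Z := L.filter (· ∈ P)
  set W := L.filter (· ∈ Q)
  have hZ : (↑Z : Set α) = ↑L ∩ P := by ext; simp [Z]
  have hW : (↑W : Set α) = ↑L ∩ Q := by ext; simp [W]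
  have hLW : L ∪ W = L := Finset.union_eq_left.2 (Finset.filter_subset _ _)
  have hZW : (↑Z : Set α) ∪ ↑W = ↑W := by
    rw [hZ, hW]
    exact Set.union_eq_right.2 (Set.inter_subset_inter_right _ hPQ)
  have hWP : (↑W : Set α) ∩ P = ↑Z := by
    rw [hW, hZ, Set.inter_assoc, Set.inter_eq_right.2 hPQ]
  have tower := A.deltaRel_union L W ↑Z (A.newEdges_finite _ _)
  rw [hLW, hZW, hW, hZ] at tower
  have := hP.deltaRel_inter_nonneg W
  rw [hWP, hZ] at this
  linarith

theorem SelfSuff.union_of_deltaRel_nonpos {P : Set α} (hP : A.SelfSuff P) {L : Finset α}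
    (hL : A.deltaRel L P ≤ 0) : A.SelfSuff (P ∪ ↑L) := by
  refine A.selfSuff_iff.2 fun X => ?_
  obtain ⟨hfin, hnonneg⟩ := A.selfSuff_iff.1 hP (X ∪ L)
  have hsub : A.newEdges ↑X (P ∪ ↑L) ⊆ A.newEdges ↑(X ∪ L) P := fun e ⟨he, heX, hePL⟩ =>
    ⟨he, heX.trans (by simp only [Finset.coe_union]; tauto_set),
      fun h => hePL (h.trans Set.subset_union_left)⟩
  have tower := A.deltaRel_union X L P hfin
  exact ⟨hfin.subset hsub, by linarith⟩

theorem SelfSuff.newEdges_eq_of_deltaRel_inter_nonpos {P : Set α} (hP : A.SelfSuff P)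
    {L : Finset α} (hL : A.deltaRel L (↑L ∩ P) ≤ 0) :
    A.newEdges ↑L (↑L ∩ P) = A.newEdges ↑L P := by
  obtain ⟨hfin, hnonneg⟩ := A.selfSuff_iff.1 hP L
  refine Set.eq_of_subset_of_ncard_le (A.newEdges_inter_subset ↑L P) ?_ hfin
  rw [deltaRel_def, Set.sdiff_self_inter] at hL
  rw [deltaRel_def] at hnonneg
  omega

theorem edgesIn_union_of_newEdges_subset {P L : Set α}
    (h : A.newEdges L P ⊆ A.newEdges L (L ∩ P)) :
    A.edgesIn (P ∪ L) = A.edgesIn P ∪ A.edgesIn L := by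
  ext e
  simp only [edgesIn, Set.mem_ofPred_eq, Set.mem_union]
  constructor
  · rintro ⟨he, hePL⟩
    by_cases heP : ↑e ⊆ P
    · exact Or.inl ⟨he, heP⟩
    · exact Or.inr ⟨he, (h ⟨he, by rwa [Set.union_comm], heP⟩).2.1.trans (by simp)⟩
  · rintro (⟨he, heP⟩ | ⟨he, heL⟩)
    · exact ⟨he, heP.trans Set.subset_union_left⟩
    · exact ⟨he, heL.trans Set.subset_union_right⟩

theorem SelfSuff.union_of_deltaRel_inter_nonpos {P : Set α} (hP : A.SelfSuff P) {L : Finset α}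
    (hL : A.deltaRel L (↑L ∩ P) ≤ 0) :
    A.SelfSuff (P ∪ ↑L) ∧ A.edgesIn (P ∪ ↑L) = A.edgesIn P ∪ A.edgesIn ↑L := by
  have hfree := hP.newEdges_eq_of_deltaRel_inter_nonpos hL
  refine ⟨hP.union_of_deltaRel_nonpos ?_, edgesIn_union_of_newEdges_subset hfree.ge⟩
  rwa [deltaRel_def, ← hfree, ← Set.sdiff_self_inter, ← deltaRel_def]

end Hypergraph'

theorem selfSuff_union_of_deltaRel_nonpos_general {α : Type*}
    (A : Hypergraph' α) (P : Set α) (hP : A.SelfSuff P)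
    (n : ℕ) (Y : Fin n → Finset α)
    (hY : ∀ i, A.deltaRel (Y i) (↑(Y i) ∩ P) ≤ 0) :
    A.SelfSuff (P ∪ ⋃ i, ↑(Y i)) ∧
      A.edgesIn (P ∪ ⋃ i, ↑(Y i)) = A.edgesIn P ∪ ⋃ i, A.edgesIn ↑(Y i) := by
  induction n with
  | zero => simpa using hP
  | succ n ih =>
    obtain ⟨hQ, hedgesQ⟩ := ih (Y ∘ Fin.castSucc) fun i => hY _
    set Q := P ∪ ⋃ i, (↑((Y ∘ Fin.castSucc) i) : Set α)
    have hlast : A.deltaRel (Y (Fin.last n)) (↑(Y (Fin.last n)) ∩ Q) ≤ 0 :=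
      (hP.deltaRel_inter_le_of_subset Set.subset_union_left _).trans (hY _)
    obtain ⟨hQY, hedgesQY⟩ := hQ.union_of_deltaRel_inter_nonpos hlast
    have hunion : P ∪ ⋃ i, (↑(Y i) : Set α) = Q ∪ ↑(Y (Fin.last n)) := by
      rw [Set.iUnion_fin_add_one_eq_iUnion_castSucc, Set.union_assoc]
      rfl
    refine ⟨hunion ▸ hQY, ?_⟩
    rw [hunion, hedgesQY, hedgesQ, Set.iUnion_fin_add_one_eq_iUnion_castSucc
      (fun i => A.edgesIn ↑(Y i)), Set.union_assoc]
    rfl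

/-- if `P ≤ A` and `δ(Yᵢ/Yᵢ ∩ P) ≤ 0` for each `i`, then
`P ∪ ⋃ᵢ Yᵢ ≤ A` and the `Yᵢ` are freely joined over `P`:
`R[P ∪ ⋃ᵢ Yᵢ] = R[P] ∪ ⋃ᵢ R[Yᵢ]`. -/
theorem selfSuff_union_of_deltaRel_nonpos {α : Type*} [DecidableEq α]
    (A : Hypergraph' α) (hA : A.SelfSuff ∅) (P : Set α) (hP : A.SelfSuff P)
    (n : ℕ) (Y : Fin n → Finset α)
    (hY : ∀ i, A.deltaRel (Y i) (↑(Y i) ∩ P) ≤ 0) :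
    A.SelfSuff (P ∪ ⋃ i, ↑(Y i)) ∧
      A.edgesIn (P ∪ ⋃ i, ↑(Y i)) = A.edgesIn P ∪ ⋃ i, A.edgesIn ↑(Y i) :=
  selfSuff_union_of_deltaRel_nonpos_general A P hP n Y hY
end
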